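/- arXiv:2208.04925 — 4 statements merged into one kernel-verified Lean document; each statement's English description precedes it below -/
import Mathlib

section
/- Fix n ≥ 2 and ε > 0. Let V₁ = ℝ^{2n} with its standard inner product, V₂ = ℝ, and let B : V₁ × V₁ → ℝ be the alternating bilinear map B((x,y),(x',y')) = Σ_{j=1}^n (x_j y'_j − y_j x'_j) + ε (x₁ x'₂ − x₂ x'₁), where (x,y) denotes (x₁,…,xₙ,y₁,…,yₙ). Then the H-type deviation of this step-two Carnot datum equals ε · √( (2 + ((n−1)/n) ε²) / (n + 4ε² + ε⁴) ). (This datum models the group Ḡ^n_ε.) -/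
open scoped RealInnerProductSpace

noncomputable section

variable {V₁ : Type*} [NormedAddCommGroup V₁] [InnerProductSpace ℝ V₁] [FiniteDimensional ℝ V₁]
variable {V₂ : Type*} [AddCommGroup V₂] [Module ℝ V₂] [FiniteDimensional ℝ V₂]

/-- `g` is an inner product (symmetric positive-definite bilinear form) on `V₂`. -/
structure IsInnerProd (g : V₂ →ₗ[ℝ] V₂ →ₗ[ℝ] ℝ) : Prop where
  symm : ∀ s t : V₂, g s t = g t s
  posdef : ∀ t : V₂, t ≠ 0 → 0 < g t t

/-- The norm `‖t‖_g = √(g t t)` associated to a vertical inner product `g`. -/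
def gnorm (g : V₂ →ₗ[ℝ] V₂ →ₗ[ℝ] ℝ) (t : V₂) : ℝ := Real.sqrt (g t t)

/-- The Hilbert–Schmidt norm `‖F‖_HS = √(trace(F* F))` of an endomorphism of the
inner product space `V₁`. -/
def hsNorm (F : V₁ →ₗ[ℝ] V₁) : ℝ :=
  Real.sqrt (LinearMap.trace ℝ V₁ (LinearMap.adjoint F ∘ₗ F))

/-- `J` is the J-operator of the bracket `B` with respect to the vertical inner product `g`:
`⟨J_T U, V⟩_h = g(B(U,V), T)` for all `U V : V₁`, `T : V₂`. -/
def IsJOp (B : V₁ →ₗ[ℝ] V₁ →ₗ[ℝ] V₂) (g : V₂ →ₗ[ℝ] V₂ →ₗ[ℝ] ℝ)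
    (J : V₂ → V₁ →ₗ[ℝ] V₁) : Prop :=
  ∀ (T : V₂) (U V : V₁), ⟪J T U, V⟫ = g (B U V) T

/-- The H-type deviation relative to a fixed vertical inner product `g` with J-operator `J`:
`δ(g) = (dim V₁)^{-1/2} sup { ‖(J_T)² + id‖_HS : ‖T‖_g = 1 }`. -/
def deltaOf (g : V₂ →ₗ[ℝ] V₂ →ₗ[ℝ] ℝ) (J : V₂ → V₁ →ₗ[ℝ] V₁) : ℝ :=
  (Real.sqrt (Module.finrank ℝ V₁))⁻¹ *
    sSup ((fun T => hsNorm (J T ∘ₗ J T + LinearMap.id)) '' {T : V₂ | gnorm g T = 1})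

/-- The H-type deviation of a step-two Carnot datum: the infimum of `δ(g)` over all vertical
inner products `g` on `V₂`. -/
def htypeDeviation (B : V₁ →ₗ[ℝ] V₁ →ₗ[ℝ] V₂) : ℝ :=
  sInf { d : ℝ | ∃ (g : V₂ →ₗ[ℝ] V₂ →ₗ[ℝ] ℝ) (J : V₂ → V₁ →ₗ[ℝ] V₁),
    IsInnerProd g ∧ IsJOp B g J ∧ d = deltaOf g J }

end

/-! Since `V₂ = ℝ`, an inner product on `V₂` is `g(s, t) = c s t` with `c > 0`, and its J-operator
is `J^g_T = c T • J` for the fixed skew map `J` with `⟪J u, v⟫ = B u v`. On the `g`-unit sphere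
`(J^g_T)² = c J²`, and skewness gives `‖c J² + id‖²_HS = c² tr J⁴ + 2 c tr J² + dim V₁`, a
quadratic in `c` minimised at `c = -tr J² / tr J⁴`; hence `δ² = 1 - (tr J²)² / (dim V₁ · tr J⁴)`.
For `Ḡⁿ_ε`, `J (x, y) = (ε k x - y, x)` with `k` the quarter turn of the `(x₁, x₂)`-plane, so
`tr J² = -2 (n + ε²)` and `tr J⁴ = 2 (n + 4 ε² + ε⁴)`. -/

open scoped RealInnerProductSpace
open Set Matrix

lemma Matrix.trace_fromBlocks {m n R : Type*} [Fintype m] [Fintype n] [AddCommMonoid R]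
    (A : Matrix m m R) (B : Matrix m n R) (C : Matrix n m R) (D : Matrix n n R) :
    trace (fromBlocks A B C D) = trace A + trace D := by
  simp [trace, Fintype.sum_sum_type]

lemma Matrix.trace_toLpLin {ι R : Type*} [Fintype ι] [DecidableEq ι] [CommRing R]
    (p : ENNReal) (M : Matrix ι ι R) : LinearMap.trace R _ (toLpLin p p M) = trace M := by
  rw [toLpLin_eq_toLin, trace_toLin_eq]

section GbarMatrix

variable {ι : Type*} [DecidableEq ι] (ε : ℝ) {i j : ι}

def quarterTurn (i j : ι) : Matrix ι ι ℝ := single j i 1 - single i j 1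

def planeProj (i j : ι) : Matrix ι ι ℝ := single i i 1 + single j j 1

/-- The matrix of the J-operator of `Ḡⁿ_ε` in the splitting `ℝ²ⁿ = ℝⁿ_x ⊕ ℝⁿ_y`, with the
`(x_i, x_j)`-plane in the role of `(x₁, x₂)`. -/
def gbarMatrix (i j : ι) : Matrix (ι ⊕ ι) (ι ⊕ ι) ℝ := fromBlocks (ε • quarterTurn i j) (-1) 1 0

lemma gbarMatrix_transpose : (gbarMatrix ε i j)ᵀ = -gbarMatrix ε i j := by
  simp [gbarMatrix, quarterTurn, fromBlocks_transpose, fromBlocks_neg, ← smul_neg]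

variable [Fintype ι]

lemma quarterTurn_mul_self (hij : i ≠ j) : quarterTurn i j * quarterTurn i j = -planeProj i j := by
  simp [quarterTurn, planeProj, sub_mul, mul_sub, single_mul_single_same,
    single_mul_single_of_ne, hij, hij.symm]
  abel

lemma planeProj_mul_self (hij : i ≠ j) : planeProj i j * planeProj i j = planeProj i j := by
  simp [planeProj, add_mul, mul_add, single_mul_single_same, single_mul_single_of_ne, hij, hij.symm]

lemma trace_planeProj : trace (planeProj i j) = 2 := by
  simp [planeProj, trace_single_eq_same]
  norm_num

lemma inner_toEuclideanLin_gbarMatrix (u v : EuclideanSpace ℝ (ι ⊕ ι)) :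
    ⟪toEuclideanLin (gbarMatrix ε i j) u, v⟫ =
      ∑ k, (u (Sum.inl k) * v (Sum.inr k) - u (Sum.inr k) * v (Sum.inl k))
        + ε * (u (Sum.inl i) * v (Sum.inl j) - u (Sum.inl j) * v (Sum.inl i)) := by
  simp [PiLp.inner_apply, toLpLin_apply, gbarMatrix, fromBlocks_mulVec, quarterTurn, smul_mulVec,
    sub_mulVec, neg_mulVec, single_mulVec, Fintype.sum_sum_type, Function.update_apply, mul_add,
    mul_sub, Finset.sum_add_distrib, Finset.sum_sub_distrib]
  simp only [mul_comm (v.ofLp _) (u.ofLp _)]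
  ring

lemma adjoint_toEuclideanLin_gbarMatrix :
    LinearMap.adjoint (toEuclideanLin (gbarMatrix ε i j)) = -toEuclideanLin (gbarMatrix ε i j) := by
  rw [← toEuclideanLin_conjTranspose_eq_adjoint, conjTranspose_eq_transpose_of_trivial,
    gbarMatrix_transpose, map_neg]

lemma gbarMatrix_mul_self (hij : i ≠ j) : gbarMatrix ε i j * gbarMatrix ε i j =
    fromBlocks (-(1 + ε ^ 2 • planeProj i j)) (-(ε • quarterTurn i j))
      (ε • quarterTurn i j) (-1) := by
  simp [gbarMatrix, fromBlocks_multiply, smul_smul, quarterTurn_mul_self hij, sq]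

lemma trace_gbarMatrix_sq (hij : i ≠ j) :
    trace (gbarMatrix ε i j * gbarMatrix ε i j) = -2 * (Fintype.card ι + ε ^ 2) := by
  simp [gbarMatrix_mul_self ε hij, trace_fromBlocks, trace_planeProj]
  ring

lemma trace_gbarMatrix_pow_four (hij : i ≠ j) :
    trace (gbarMatrix ε i j * gbarMatrix ε i j * (gbarMatrix ε i j * gbarMatrix ε i j)) =
      2 * (Fintype.card ι + 4 * ε ^ 2 + ε ^ 4) := by
  have htopLeft : (1 + ε ^ 2 • planeProj i j) * (1 + ε ^ 2 • planeProj i j)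
      - ε • quarterTurn i j * ε • quarterTurn i j = 1 + (3 * ε ^ 2 + ε ^ 4) • planeProj i j := by
    simp only [mul_add, add_mul, mul_one, one_mul, smul_mul_smul, quarterTurn_mul_self hij,
      planeProj_mul_self hij]
    module
  have hbottomRight :
      -(ε • quarterTurn i j * ε • quarterTurn i j) + 1 = 1 + ε ^ 2 • planeProj i j := by
    simp only [smul_mul_smul, quarterTurn_mul_self hij]
    module
  rw [gbarMatrix_mul_self ε hij, fromBlocks_multiply, trace_fromBlocks]
  simp only [mul_neg, neg_mul, mul_one, neg_neg, ← sub_eq_add_neg, htopLeft, hbottomRight]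
  simp [trace_add, trace_smul, trace_planeProj]
  ring

end GbarMatrix

lemma bilin_real_apply (g : ℝ →ₗ[ℝ] ℝ →ₗ[ℝ] ℝ) (s t : ℝ) : g s t = g 1 1 * (s * t) := by
  have h := (LinearMap.map_smul₂ g s 1 (t • (1 : ℝ))).trans (congrArg _ (map_smul (g 1) t 1))
  simp only [smul_eq_mul, mul_one] at h
  rw [h]
  ring

lemma isLeast_mul_sqrt_quadratic {κ a b m : ℝ} (hκ : 0 ≤ κ) (ha : 0 < a) (hb : b < 0) :
    IsLeast ((fun c => κ * √(c ^ 2 * a + 2 * c * b + m)) '' Ioi 0) (κ * √(m - b ^ 2 / a)) := by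
  constructor
  · refine ⟨-b / a, div_pos (neg_pos.mpr hb) ha, ?_⟩
    dsimp only
    congr 2
    field_simp
    ring
  · rintro _ ⟨c, -, rfl⟩
    have hsq : 0 ≤ (c * a + b) ^ 2 / a := by positivity
    have hsplit : m - b ^ 2 / a + (c * a + b) ^ 2 / a = c ^ 2 * a + 2 * c * b + m := by
      field_simp
      ring
    dsimp only
    gcongr
    linarith

section RankOneCentre

variable {V : Type*} [NormedAddCommGroup V] [InnerProductSpace ℝ V]
  {B : V →ₗ[ℝ] V →ₗ[ℝ] ℝ} {J : V →ₗ[ℝ] V}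

lemma isJOp_iff_eq_smul (hJ : ∀ u v, ⟪J u, v⟫ = B u v) (g : ℝ →ₗ[ℝ] ℝ →ₗ[ℝ] ℝ)
    (J' : ℝ → V →ₗ[ℝ] V) : IsJOp B g J' ↔ ∀ T, J' T = (g 1 1 * T) • J := by
  have hg : ∀ T u v, g (B u v) T = ⟪((g 1 1 * T) • J) u, v⟫ := by
    intro T u v
    rw [bilin_real_apply, LinearMap.smul_apply, real_inner_smul_left, hJ]
    ring
  simp only [IsJOp, hg]
  exact ⟨fun h T => LinearMap.ext fun u => ext_inner_right ℝ (h T u), fun h T u v => by rw [h]⟩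

variable [FiniteDimensional ℝ V]

lemma hsNorm_smul_comp_self_add_id (hJ : LinearMap.adjoint J = -J) (c : ℝ) :
    hsNorm (c • (J ∘ₗ J) + LinearMap.id) =
      √(c ^ 2 * LinearMap.trace ℝ V ((J ∘ₗ J) ∘ₗ (J ∘ₗ J))
        + 2 * c * LinearMap.trace ℝ V (J ∘ₗ J) + Module.finrank ℝ V) := by
  have hsa : LinearMap.adjoint (c • (J ∘ₗ J) + LinearMap.id) = c • (J ∘ₗ J) + LinearMap.id := by
    simp [LinearMap.adjoint_comp, hJ]
  rw [hsNorm, hsa]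
  congr 1
  simp [LinearMap.comp_add, LinearMap.add_comp, LinearMap.smul_comp, LinearMap.comp_smul,
    smul_smul]
  ring

lemma deltaOf_eq_of_eq_smul {g : ℝ →ₗ[ℝ] ℝ →ₗ[ℝ] ℝ} (hg : IsInnerProd g) {J' : ℝ → V →ₗ[ℝ] V}
    (hJ' : ∀ T, J' T = (g 1 1 * T) • J) :
    deltaOf g J' = (√(Module.finrank ℝ V))⁻¹ * hsNorm (g 1 1 • (J ∘ₗ J) + LinearMap.id) := by
  set c := g 1 1
  have hc : 0 < c := hg.posdef 1 one_ne_zero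
  have hsphere : ∀ T, gnorm g T = 1 ↔ c * T ^ 2 = 1 := by
    intro T
    rw [gnorm, bilin_real_apply, Real.sqrt_eq_one, sq]
  have hsq : ∀ T, c * T ^ 2 = 1 → J' T ∘ₗ J' T = c • (J ∘ₗ J) := by
    intro T hT
    rw [hJ', LinearMap.smul_comp, LinearMap.comp_smul, smul_smul]
    congr 1
    linear_combination c * hT
  have himage : (fun T => hsNorm (J' T ∘ₗ J' T + LinearMap.id)) '' {T | gnorm g T = 1} =
      {hsNorm (c • (J ∘ₗ J) + LinearMap.id)} := by
    refine eq_singleton_iff_nonempty_unique_mem.mpr ⟨⟨_, (√c)⁻¹, ?_, rfl⟩, ?_⟩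
    · rw [mem_ofPred_eq, hsphere, inv_pow, Real.sq_sqrt hc.le, mul_inv_cancel₀ hc.ne']
    · rintro _ ⟨T, hT, rfl⟩
      dsimp only
      rw [hsq T ((hsphere T).mp hT)]
  rw [deltaOf, himage, csSup_singleton]

lemma htypeDeviation_eq_sInf_of_real (hJ : ∀ u v, ⟪J u, v⟫ = B u v) :
    htypeDeviation B = sInf ((fun c : ℝ =>
      (√(Module.finrank ℝ V))⁻¹ * hsNorm (c • (J ∘ₗ J) + LinearMap.id)) '' Ioi 0) := by
  rw [htypeDeviation]
  congr 1
  ext d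
  simp only [isJOp_iff_eq_smul hJ, mem_ofPred_eq, mem_image, mem_Ioi]
  constructor
  · rintro ⟨g, J', hg, hJ', rfl⟩
    exact ⟨g 1 1, hg.posdef 1 one_ne_zero, (deltaOf_eq_of_eq_smul hg hJ').symm⟩
  · rintro ⟨c, hc, rfl⟩
    have hg : IsInnerProd (c • LinearMap.mul ℝ ℝ) :=
      ⟨fun s t => by simp [mul_comm], fun t ht => by simp [hc, mul_self_pos.mpr ht]⟩
    have hc1 : (c • LinearMap.mul ℝ ℝ) 1 1 = c := by simp
    refine ⟨c • LinearMap.mul ℝ ℝ, fun T => (c * T) • J, hg, fun T => by rw [hc1], ?_⟩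
    rw [deltaOf_eq_of_eq_smul hg fun T => by rw [hc1], hc1]

theorem htypeDeviation_eq_of_real (hJ : ∀ u v, ⟪J u, v⟫ = B u v)
    (hskew : LinearMap.adjoint J = -J) (h2 : LinearMap.trace ℝ V (J ∘ₗ J) < 0)
    (h4 : 0 < LinearMap.trace ℝ V ((J ∘ₗ J) ∘ₗ (J ∘ₗ J))) :
    htypeDeviation B = (√(Module.finrank ℝ V))⁻¹ * √(Module.finrank ℝ V
      - LinearMap.trace ℝ V (J ∘ₗ J) ^ 2 / LinearMap.trace ℝ V ((J ∘ₗ J) ∘ₗ (J ∘ₗ J))) := by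
  rw [htypeDeviation_eq_sInf_of_real hJ]
  simp only [hsNorm_smul_comp_self_add_id hskew]
  exact (isLeast_mul_sqrt_quadratic (by positivity) h4 h2).csInf_eq

end RankOneCentre

/-- H-type deviation of the group `Ḡ^n_ε` (`n ≥ 2`, `ε > 0`): `V₁ = ℝ^{2n}`, `V₂ = ℝ`,
with bracket `B((x,y),(x',y')) = Σⱼ (xⱼ y'ⱼ − yⱼ x'ⱼ) + ε (x₁ x'₂ − x₂ x'₁)`.
Then `δ = ε √((2 + ((n−1)/n) ε²)/(n + 4ε² + ε⁴))`. -/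
theorem htypeDeviation_Gbar_eps
    (n : ℕ) (hn : 2 ≤ n) (ε : ℝ) (hε : 0 < ε)
    (B : EuclideanSpace ℝ (Fin n ⊕ Fin n) →ₗ[ℝ]
      EuclideanSpace ℝ (Fin n ⊕ Fin n) →ₗ[ℝ] ℝ)
    (hB : ∀ u v : EuclideanSpace ℝ (Fin n ⊕ Fin n),
      B u v =
        (∑ j : Fin n, (u (Sum.inl j) * v (Sum.inr j) - u (Sum.inr j) * v (Sum.inl j)))
        + ε * (u (Sum.inl ⟨0, by omega⟩) * v (Sum.inl ⟨1, by omega⟩)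
              - u (Sum.inl ⟨1, by omega⟩) * v (Sum.inl ⟨0, by omega⟩))) :
    htypeDeviation B =
      ε * Real.sqrt ((2 + (((n : ℝ) - 1) / (n : ℝ)) * ε ^ 2)
        / ((n : ℝ) + 4 * ε ^ 2 + ε ^ 4)) := by
  have hij : (⟨0, by omega⟩ : Fin n) ≠ ⟨1, by omega⟩ := by simp [Fin.ext_iff]
  set A := gbarMatrix ε (⟨0, by omega⟩ : Fin n) ⟨1, by omega⟩
  have hJ : ∀ u v, ⟪toEuclideanLin A u, v⟫ = B u v := fun u v => by
    rw [hB, inner_toEuclideanLin_gbarMatrix]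
  have h2 : LinearMap.trace ℝ _ (toEuclideanLin A ∘ₗ toEuclideanLin A) = -2 * (n + ε ^ 2) := by
    rw [← toLpLin_mul_same, trace_toLpLin, trace_gbarMatrix_sq ε hij, Fintype.card_fin]
  have h4 : LinearMap.trace ℝ _ ((toEuclideanLin A ∘ₗ toEuclideanLin A) ∘ₗ
      (toEuclideanLin A ∘ₗ toEuclideanLin A)) = 2 * (n + 4 * ε ^ 2 + ε ^ 4) := by
    rw [← toLpLin_mul_same, ← toLpLin_mul_same, trace_toLpLin,
      trace_gbarMatrix_pow_four ε hij, Fintype.card_fin]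
  have hD : 0 < (n : ℝ) + 4 * ε ^ 2 + ε ^ 4 := by positivity
  have hε_mul_sqrt : ∀ x, ε * √x = √(ε ^ 2 * x) := fun x => by
    rw [Real.sqrt_mul (sq_nonneg ε), Real.sqrt_sq hε.le]
  rw [htypeDeviation_eq_of_real hJ (adjoint_toEuclideanLin_gbarMatrix ε) (by rw [h2]; nlinarith)
    (by rw [h4]; positivity), h2, h4, finrank_euclideanSpace, Fintype.card_sum, Fintype.card_fin,
    ← Real.sqrt_inv, ← Real.sqrt_mul (by positivity), hε_mul_sqrt]
  congr 1
  push_cast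
  field_simp
  ring
end

section
/- Let (V₁, ⟨·,·⟩_h, V₂, B) be a step-two Carnot datum with dim V₁ = m and dim V₂ = m₂, set Q = m + 2m₂, let g be any inner product on V₂, and let ε₁,…,ε_{m₂} be a g-orthonormal basis of V₂. Define Φ_g(x,t) = 16(Q+2)·⟨((J^g_t)² + ‖t‖_g²·id)x, x⟩_h / N_g(x,t)⁶ − 2·Σ_{q=1}^{m₂} ⟨((J^g_{ε_q})² + id)x, x⟩_h / N_g(x,t)². Then for every (x,t) ∈ V₁ × V₂ with (x,t) ≠ (0,0), |Φ_g(x,t)| ≤ √m · (Q + 2 + 2m₂) · δ(g). (The quantity Φ_g equals N_g·ℒN_g − (Q−1)·‖∇₀N_g‖_h² for the sub-Laplacian ℒ of the associated group.) -/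
open scoped RealInnerProductSpace

/-!
For a `g`-unit vector `T`, the quadratic form of `J_T² + id` is bounded by its Hilbert–Schmidt
norm times `‖x‖²`, hence by `√m δ(g) ‖x‖²`; the supremum defining `δ(g)` is finite because
`‖J_T‖_HS² ≤ C g(T,T)` by the Cauchy–Schwarz inequality for `g`. Since `J_T² + ‖T‖² id` is
homogeneous of degree two in `T`, its quadratic form is at most `‖T‖² √m δ(g) ‖x‖²`. The Kaplan
quasinorm satisfies `‖x‖² ≤ N²` and `16‖T‖² ≤ N⁴`, which absorbs the powers of `N` in `Φ`:
the first term of `Φ` contributes `(Q + 2) √m δ(g)` and each of the `m₂` summands `2 √m δ(g)`.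
-/

section HilbertSchmidt

variable {V : Type*} [NormedAddCommGroup V] [InnerProductSpace ℝ V] [FiniteDimensional ℝ V]
  {ι : Type*} [Fintype ι]

lemma hsNorm_nonneg (F : V →ₗ[ℝ] V) : 0 ≤ hsNorm F := Real.sqrt_nonneg _

lemma hsNorm_sq_eq_sum (b : OrthonormalBasis ι ℝ V) (F : V →ₗ[ℝ] V) :
    hsNorm F ^ 2 = ∑ i, ‖F (b i)‖ ^ 2 := by
  have htrace : LinearMap.trace ℝ V (LinearMap.adjoint F ∘ₗ F) = ∑ i, ‖F (b i)‖ ^ 2 := by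
    simp only [LinearMap.trace_eq_sum_inner _ b, LinearMap.comp_apply,
      LinearMap.adjoint_inner_right, real_inner_self_eq_norm_sq]
  rw [hsNorm, htrace, Real.sq_sqrt (by positivity)]

lemma hsNorm_eq_norm_toLp (b : OrthonormalBasis ι ℝ V) (F : V →ₗ[ℝ] V) :
    hsNorm F = ‖WithLp.toLp 2 fun i => F (b i)‖ := by
  rw [← Real.sqrt_sq (hsNorm_nonneg F), ← Real.sqrt_sq (norm_nonneg (WithLp.toLp 2 _)),
    hsNorm_sq_eq_sum b, PiLp.norm_sq_eq_of_L2]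

lemma hsNorm_add_le (F G : V →ₗ[ℝ] V) : hsNorm (F + G) ≤ hsNorm F + hsNorm G := by
  let b := stdOrthonormalBasis ℝ V
  simp only [hsNorm_eq_norm_toLp b, LinearMap.add_apply]
  exact norm_add_le (WithLp.toLp 2 fun i => F (b i)) (WithLp.toLp 2 fun i => G (b i))

lemma norm_apply_le_hsNorm_mul (F : V →ₗ[ℝ] V) (x : V) : ‖F x‖ ≤ hsNorm F * ‖x‖ := by
  let b := stdOrthonormalBasis ℝ V
  calc ‖F x‖ = ‖∑ i, ⟪b i, x⟫ • F (b i)‖ := by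
        conv_lhs => rw [← b.sum_repr' x]
        simp only [map_sum, map_smul]
    _ ≤ ∑ i, |⟪b i, x⟫| * ‖F (b i)‖ := (norm_sum_le _ _).trans_eq (by simp [norm_smul])
    _ ≤ √(∑ i, |⟪b i, x⟫| ^ 2) * √(∑ i, ‖F (b i)‖ ^ 2) := Real.sum_mul_le_sqrt_mul_sqrt _ _ _
    _ = hsNorm F * ‖x‖ := by
        simp only [sq_abs, b.sum_sq_inner_right, ← hsNorm_sq_eq_sum b,
          Real.sqrt_sq (norm_nonneg _), Real.sqrt_sq (hsNorm_nonneg _), mul_comm]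

lemma abs_inner_le_hsNorm_mul (F : V →ₗ[ℝ] V) (x : V) : |⟪F x, x⟫| ≤ hsNorm F * ‖x‖ ^ 2 :=
  calc |⟪F x, x⟫| ≤ ‖F x‖ * ‖x‖ := abs_real_inner_le_norm _ _
    _ ≤ hsNorm F * ‖x‖ * ‖x‖ := by gcongr; exact norm_apply_le_hsNorm_mul F x
    _ = hsNorm F * ‖x‖ ^ 2 := by ring

lemma hsNorm_comp_le (F G : V →ₗ[ℝ] V) : hsNorm (F ∘ₗ G) ≤ hsNorm F * hsNorm G := by
  let b := stdOrthonormalBasis ℝ V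
  refine le_of_sq_le_sq ?_ (mul_nonneg (hsNorm_nonneg F) (hsNorm_nonneg G))
  calc hsNorm (F ∘ₗ G) ^ 2 = ∑ i, ‖F (G (b i))‖ ^ 2 := hsNorm_sq_eq_sum b _
    _ ≤ ∑ i, (hsNorm F * ‖G (b i)‖) ^ 2 := by
        gcongr with i; exact norm_apply_le_hsNorm_mul F _
    _ = (hsNorm F * hsNorm G) ^ 2 := by simp only [mul_pow, ← Finset.mul_sum, hsNorm_sq_eq_sum b]

end HilbertSchmidt

section InnerProd

variable {V₂ : Type*} [AddCommGroup V₂] [Module ℝ V₂] {g : V₂ →ₗ[ℝ] V₂ →ₗ[ℝ] ℝ}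

lemma IsInnerProd.nonneg (hg : IsInnerProd g) (t : V₂) : 0 ≤ g t t := by
  rcases eq_or_ne t 0 with rfl | ht
  · simp
  · exact (hg.posdef t ht).le

lemma IsInnerProd.sq_le_mul (hg : IsInnerProd g) (s t : V₂) : g s t ^ 2 ≤ g s s * g t t := by
  have hquad : ∀ c : ℝ, 0 ≤ g t t * (c * c) + -2 * g s t * c + g s s := fun c => by
    have := hg.nonneg (s - c • t)
    simp only [map_sub, map_smul, LinearMap.sub_apply, LinearMap.smul_apply, smul_eq_mul,
      hg.symm t s] at this
    linarith
  have := discrim_le_zero hquad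
  rw [discrim] at this
  linarith

lemma IsInnerProd.gnorm_sq (hg : IsInnerProd g) (t : V₂) : gnorm g t ^ 2 = g t t :=
  Real.sq_sqrt (hg.nonneg t)

lemma IsInnerProd.gnorm_pos (hg : IsInnerProd g) {t : V₂} (ht : t ≠ 0) : 0 < gnorm g t :=
  Real.sqrt_pos.mpr (hg.posdef t ht)

lemma gnorm_smul (c : ℝ) (t : V₂) : gnorm g (c • t) = |c| * gnorm g t := by
  have hquad : g (c • t) (c • t) = c ^ 2 * g t t := by
    simp only [map_smul, LinearMap.smul_apply, smul_eq_mul]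
    ring
  rw [gnorm, gnorm, hquad, Real.sqrt_mul (sq_nonneg c), Real.sqrt_sq_eq_abs]

end InnerProd

section JOperator

variable {V₁ : Type*} [NormedAddCommGroup V₁] [InnerProductSpace ℝ V₁]
  {V₂ : Type*} [AddCommGroup V₂] [Module ℝ V₂]
  {B : V₁ →ₗ[ℝ] V₁ →ₗ[ℝ] V₂} {g : V₂ →ₗ[ℝ] V₂ →ₗ[ℝ] ℝ} {J : V₂ → V₁ →ₗ[ℝ] V₁}

lemma IsJOp.map_smul (hJ : IsJOp B g J) (c : ℝ) (T : V₂) : J (c • T) = c • J T := by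
  ext U
  refine ext_inner_right ℝ fun V => ?_
  rw [LinearMap.smul_apply, real_inner_smul_left, hJ, hJ, LinearMap.map_smul, smul_eq_mul]

lemma IsJOp.map_zero (hJ : IsJOp B g J) : J 0 = 0 := by
  simpa using hJ.map_smul 0 0

variable [FiniteDimensional ℝ V₁]

lemma IsJOp.hsNorm_apply_sq_le {ι : Type*} [Fintype ι] (hJ : IsJOp B g J) (hg : IsInnerProd g)
    (b : OrthonormalBasis ι ℝ V₁) (T : V₂) :
    hsNorm (J T) ^ 2 ≤ (∑ i, ∑ j, g (B (b i) (b j)) (B (b i) (b j))) * g T T := by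
  calc hsNorm (J T) ^ 2 = ∑ i, ∑ j, g (B (b i) (b j)) T ^ 2 := by
        simp only [hsNorm_sq_eq_sum b, ← b.sum_sq_inner_right]
        congr! 4 with i _ j _
        rw [← real_inner_comm, hJ]
    _ ≤ ∑ i, ∑ j, g (B (b i) (b j)) (B (b i) (b j)) * g T T := by
        gcongr; exact hg.sq_le_mul _ _
    _ = _ := by simp only [Finset.sum_mul]

lemma IsJOp.bddAbove_hsNorm_comp_self_add_id (hJ : IsJOp B g J) (hg : IsInnerProd g) :
    BddAbove ((fun T => hsNorm (J T ∘ₗ J T + LinearMap.id)) '' {T : V₂ | gnorm g T = 1}) := by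
  let b := stdOrthonormalBasis ℝ V₁
  refine ⟨(∑ i, ∑ j, g (B (b i) (b j)) (B (b i) (b j))) + hsNorm (LinearMap.id : V₁ →ₗ[ℝ] V₁), ?_⟩
  rintro _ ⟨T, hT : gnorm g T = 1, rfl⟩
  have hTT : g T T = 1 := by rw [← hg.gnorm_sq, hT, one_pow]
  calc hsNorm (J T ∘ₗ J T + LinearMap.id) ≤ hsNorm (J T) ^ 2 + hsNorm LinearMap.id :=
        (hsNorm_add_le _ _).trans (by rw [sq]; gcongr; exact hsNorm_comp_le _ _)
    _ ≤ _ := by gcongr; simpa [hTT] using hJ.hsNorm_apply_sq_le hg b T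

lemma IsJOp.hsNorm_comp_self_add_id_le (hJ : IsJOp B g J) (hg : IsInnerProd g)
    (hV₁ : Module.finrank ℝ V₁ ≠ 0) {T : V₂} (hT : gnorm g T = 1) :
    hsNorm (J T ∘ₗ J T + LinearMap.id) ≤ √(Module.finrank ℝ V₁) * deltaOf g J := by
  rw [deltaOf, ← mul_assoc, mul_inv_cancel₀ (by positivity), one_mul]
  exact le_csSup (hJ.bddAbove_hsNorm_comp_self_add_id hg) ⟨T, hT, rfl⟩

lemma deltaOf_nonneg : 0 ≤ deltaOf g J :=
  mul_nonneg (inv_nonneg.mpr (Real.sqrt_nonneg _))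
    (Real.sSup_nonneg fun _ ⟨_, _, h⟩ => h ▸ hsNorm_nonneg _)

lemma IsJOp.abs_inner_comp_self_add_smul_id_le (hJ : IsJOp B g J) (hg : IsInnerProd g) {S : ℝ}
    (hS : ∀ T, gnorm g T = 1 → hsNorm (J T ∘ₗ J T + LinearMap.id) ≤ S) (T : V₂) (x : V₁) :
    |⟪(J T ∘ₗ J T + gnorm g T ^ 2 • (LinearMap.id : V₁ →ₗ[ℝ] V₁)) x, x⟫|
      ≤ gnorm g T ^ 2 * S * ‖x‖ ^ 2 := by
  rcases eq_or_ne T 0 with rfl | hT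
  · simp [hJ.map_zero, gnorm]
  set r := gnorm g T
  have hr : 0 < r := hg.gnorm_pos hT
  have hU : gnorm g (r⁻¹ • T) = 1 := by
    rw [gnorm_smul, abs_of_pos (inv_pos.mpr hr), inv_mul_cancel₀ hr.ne']
  have hop : J T ∘ₗ J T + r ^ 2 • LinearMap.id
      = r ^ 2 • (J (r⁻¹ • T) ∘ₗ J (r⁻¹ • T) + LinearMap.id) := by
    rw [hJ.map_smul, LinearMap.smul_comp, LinearMap.comp_smul, smul_add, smul_smul, smul_smul,
      show r ^ 2 * r⁻¹ * r⁻¹ = 1 by field_simp, one_smul]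
  rw [hop, LinearMap.smul_apply, real_inner_smul_left, abs_mul, abs_sq, mul_assoc]
  gcongr
  exact (abs_inner_le_hsNorm_mul _ x).trans (by gcongr; exact hS _ hU)

end JOperator

lemma abs_kaplan_defect_le {ι : Type*} [Fintype ι] {n a r c S I : ℝ} {K : ι → ℝ}
    (hn : 0 < n) (ha : 0 ≤ a) (hc : 0 ≤ c) (hS : 0 ≤ S)
    (han : a ≤ n ^ 2) (hrn : 16 * r ^ 2 ≤ n ^ 4)
    (hI : |I| ≤ r ^ 2 * S * a) (hK : ∀ q, |K q| ≤ S * a) :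
    |16 * c * I / n ^ 6 - 2 * ∑ q, K q / n ^ 2| ≤ (c + 2 * Fintype.card ι) * S := by
  have hfirst : |16 * c * I / n ^ 6| ≤ c * S := by
    rw [abs_div, abs_mul, abs_of_nonneg (show 0 ≤ 16 * c by positivity),
      abs_of_pos (show 0 < n ^ 6 by positivity), div_le_iff₀ (by positivity)]
    calc 16 * c * |I| ≤ 16 * c * (r ^ 2 * S * a) := by gcongr
      _ = c * S * (16 * r ^ 2 * a) := by ring
      _ ≤ c * S * (n ^ 4 * n ^ 2) := by gcongr
      _ = c * S * n ^ 6 := by ring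
  have hsecond : |2 * ∑ q, K q / n ^ 2| ≤ 2 * Fintype.card ι * S := by
    rw [abs_mul, abs_two, mul_assoc]
    gcongr
    calc |∑ q, K q / n ^ 2| ≤ ∑ q, |K q / n ^ 2| := Finset.abs_sum_le_sum_abs _ _
      _ ≤ ∑ _q : ι, S := by
          gcongr with q
          rw [abs_div, abs_of_pos (show 0 < n ^ 2 by positivity), div_le_iff₀ (by positivity)]
          exact (hK q).trans (by gcongr)
      _ = Fintype.card ι * S := by simp
  calc _ ≤ |16 * c * I / n ^ 6| + |2 * ∑ q, K q / n ^ 2| := abs_sub _ _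
    _ ≤ c * S + 2 * Fintype.card ι * S := add_le_add hfirst hsecond
    _ = _ := by ring

theorem subLaplacian_defect_le_deviation_general
    {V₁ : Type*} [NormedAddCommGroup V₁] [InnerProductSpace ℝ V₁] [FiniteDimensional ℝ V₁]
    {V₂ : Type*} [AddCommGroup V₂] [Module ℝ V₂]
    (m m₂ : ℕ) (hm : 1 ≤ m) (hdim₁ : Module.finrank ℝ V₁ = m)
    (Q : ℕ)
    (B : V₁ →ₗ[ℝ] V₁ →ₗ[ℝ] V₂)
    (g : V₂ →ₗ[ℝ] V₂ →ₗ[ℝ] ℝ) (hg : IsInnerProd g)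
    (J : V₂ → V₁ →ₗ[ℝ] V₁) (hJ : IsJOp B g J)
    (ε : Fin m₂ → V₂) (hε : ∀ q r : Fin m₂, g (ε q) (ε r) = if q = r then 1 else 0)
    (N : V₁ → V₂ → ℝ)
    (hN : ∀ (x : V₁) (t : V₂), N x t = (‖x‖ ^ 4 + 16 * gnorm g t ^ 2) ^ ((1 : ℝ) / 4))
    (Φ : V₁ → V₂ → ℝ)
    (hΦ : ∀ (x : V₁) (t : V₂), Φ x t =
      16 * ((Q : ℝ) + 2) *
          ⟪((J t ∘ₗ J t) + gnorm g t ^ 2 • (LinearMap.id : V₁ →ₗ[ℝ] V₁)) x, x⟫ / N x t ^ 6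
        - 2 * ∑ q : Fin m₂,
            ⟪((J (ε q) ∘ₗ J (ε q)) + (LinearMap.id : V₁ →ₗ[ℝ] V₁)) x, x⟫ / N x t ^ 2) :
    ∀ (x : V₁) (t : V₂), ¬(x = 0 ∧ t = 0) →
      |Φ x t| ≤ Real.sqrt m * ((Q : ℝ) + 2 + 2 * (m₂ : ℝ)) * deltaOf g J := by
  intro x t hxt
  have hS : ∀ T, gnorm g T = 1 → hsNorm (J T ∘ₗ J T + LinearMap.id) ≤ √m * deltaOf g J :=
    fun T hT => hdim₁ ▸ hJ.hsNorm_comp_self_add_id_le hg (by omega) hT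
  have hε_unit : ∀ q, gnorm g (ε q) = 1 := fun q => by simp [gnorm, hε]
  have hpos : 0 < ‖x‖ ^ 4 + 16 * gnorm g t ^ 2 := by
    rcases not_and_or.mp hxt with hx | ht
    · have := norm_pos_iff.mpr hx
      positivity
    · have := hg.gnorm_pos ht
      positivity
  have hN4 : N x t ^ 4 = ‖x‖ ^ 4 + 16 * gnorm g t ^ 2 := by
    rw [hN, ← Real.rpow_natCast, ← Real.rpow_mul hpos.le]
    norm_num
  have hNpos : 0 < N x t := by rw [hN]; positivity
  have hxN : ‖x‖ ^ 2 ≤ N x t ^ 2 :=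
    (pow_le_pow_iff_left₀ (by positivity) (by positivity) two_ne_zero).mp (by nlinarith)
  calc |Φ x t| ≤ ((Q + 2 : ℝ) + 2 * Fintype.card (Fin m₂)) * (√m * deltaOf g J) := by
        rw [hΦ]
        refine abs_kaplan_defect_le hNpos (sq_nonneg ‖x‖) (by positivity)
          (mul_nonneg (Real.sqrt_nonneg _) deltaOf_nonneg) hxN (by nlinarith)
          (hJ.abs_inner_comp_self_add_smul_id_le hg hS t x)
          fun q => (abs_inner_le_hsNorm_mul _ x).trans (by gcongr; exact hS _ (hε_unit q))
    _ = _ := by rw [Fintype.card_fin]; ring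

/-- Stability estimate for the sub-Laplacian of the Kaplan quasinorm: with
`Q = m + 2m₂` and `Φ_g(x,t) = 16(Q+2)⟨((J_t)²+‖t‖_g² id)x,x⟩/N⁶ − 2 Σ_q ⟨((J_{ε_q})²+id)x,x⟩/N²`,
one has `|Φ_g(x,t)| ≤ √m (Q+2+2m₂) δ(g)` for all `(x,t) ≠ (0,0)`. -/
theorem subLaplacian_defect_le_deviation
    {V₁ : Type*} [NormedAddCommGroup V₁] [InnerProductSpace ℝ V₁] [FiniteDimensional ℝ V₁]
    {V₂ : Type*} [AddCommGroup V₂] [Module ℝ V₂] [FiniteDimensional ℝ V₂]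
    (m m₂ : ℕ) (hm : 1 ≤ m) (hdim₁ : Module.finrank ℝ V₁ = m)
    (hm₂ : 1 ≤ m₂) (hdim₂ : Module.finrank ℝ V₂ = m₂)
    (Q : ℕ) (hQ : Q = m + 2 * m₂)
    (B : V₁ →ₗ[ℝ] V₁ →ₗ[ℝ] V₂)
    (hAlt : ∀ U : V₁, B U U = 0)
    (hSpan : Submodule.span ℝ {t : V₂ | ∃ U V : V₁, B U V = t} = ⊤)
    (g : V₂ →ₗ[ℝ] V₂ →ₗ[ℝ] ℝ) (hg : IsInnerProd g)
    (J : V₂ → V₁ →ₗ[ℝ] V₁) (hJ : IsJOp B g J)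
    (ε : Fin m₂ → V₂) (hε : ∀ q r : Fin m₂, g (ε q) (ε r) = if q = r then 1 else 0)
    (N : V₁ → V₂ → ℝ)
    (hN : ∀ (x : V₁) (t : V₂), N x t = (‖x‖ ^ 4 + 16 * gnorm g t ^ 2) ^ ((1 : ℝ) / 4))
    (Φ : V₁ → V₂ → ℝ)
    (hΦ : ∀ (x : V₁) (t : V₂), Φ x t =
      16 * ((Q : ℝ) + 2) *
          ⟪((J t ∘ₗ J t) + gnorm g t ^ 2 • (LinearMap.id : V₁ →ₗ[ℝ] V₁)) x, x⟫ / N x t ^ 6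
        - 2 * ∑ q : Fin m₂,
            ⟪((J (ε q) ∘ₗ J (ε q)) + (LinearMap.id : V₁ →ₗ[ℝ] V₁)) x, x⟫ / N x t ^ 2) :
    ∀ (x : V₁) (t : V₂), ¬(x = 0 ∧ t = 0) →
      |Φ x t| ≤ Real.sqrt m * ((Q : ℝ) + 2 + 2 * (m₂ : ℝ)) * deltaOf g J :=
  subLaplacian_defect_le_deviation_general m m₂ hm hdim₁ Q B g hg J hJ ε hε N hN Φ hΦ
end

section
/- Let m ≥ 1 and m₂ ≥ 1 be integers and set Q = m + 2m₂. The function h : (0,∞) → ℝ defined by h(L) = 16(Q+2)L² / (L⁴+16)^{3/2} − 2m₂ L² / (L⁴+16)^{1/2} attains its maximum over (0,∞) at L₀ = 2^{3/4}(m+2)^{1/4}/(Q+2+m₂)^{1/4}, and the maximum value equals 2(m+2)^{3/2} / (3√3·√(Q+2)); that is, h(L) ≤ 2(m+2)^{3/2}/(3√3·√(Q+2)) for all L > 0, with equality at L = L₀. -/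
lemma cube_aux (b c x : ℝ) (hb : 0 ≤ b) (hc : 0 ≤ c) (hx : 0 ≤ x) :
    3 * b * c ^ 2 * x - b * x ^ 3 ≤ 2 * b * c ^ 3 := by
  nlinarith [mul_nonneg hb (mul_nonneg (sq_nonneg (x - c)) (by linarith : (0:ℝ) ≤ x + 2 * c))]

/-- For positive integers `m, m₂` and `Q = m + 2 m₂`, the function
`h(L) = 16(Q+2)L² / (L⁴+16)^{3/2} − 2 m₂ L² / (L⁴+16)^{1/2}` on `(0,∞)` is bounded above by
`2(m+2)^{3/2} / (3√3 √(Q+2))`, and attains this value at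
`L₀ = 2^{3/4} (m+2)^{1/4} / (Q+2+m₂)^{1/4}`. -/
theorem h_max_value (m m₂ : ℕ) (hm : 1 ≤ m) (hm₂ : 1 ≤ m₂) (Q : ℕ) (hQ : Q = m + 2 * m₂) :
    (∀ L : ℝ, 0 < L →
      16 * ((Q : ℝ) + 2) * L ^ 2 / (L ^ 4 + 16) ^ ((3 : ℝ) / 2)
          - 2 * (m₂ : ℝ) * L ^ 2 / (L ^ 4 + 16) ^ ((1 : ℝ) / 2)
        ≤ 2 * ((m : ℝ) + 2) ^ ((3 : ℝ) / 2) / (3 * Real.sqrt 3 * Real.sqrt ((Q : ℝ) + 2))) ∧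
    (∀ L₀ : ℝ,
      L₀ = 2 ^ ((3 : ℝ) / 4) * ((m : ℝ) + 2) ^ ((1 : ℝ) / 4)
            / ((Q : ℝ) + 2 + (m₂ : ℝ)) ^ ((1 : ℝ) / 4) →
      16 * ((Q : ℝ) + 2) * L₀ ^ 2 / (L₀ ^ 4 + 16) ^ ((3 : ℝ) / 2)
          - 2 * (m₂ : ℝ) * L₀ ^ 2 / (L₀ ^ 4 + 16) ^ ((1 : ℝ) / 2)
        = 2 * ((m : ℝ) + 2) ^ ((3 : ℝ) / 2) / (3 * Real.sqrt 3 * Real.sqrt ((Q : ℝ) + 2))) := by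
  have hQR : (Q : ℝ) = (m : ℝ) + 2 * (m₂ : ℝ) := by exact_mod_cast congrArg (Nat.cast : ℕ → ℝ) hQ
  set a : ℝ := (m : ℝ) + 2 with ha_def
  set b : ℝ := (Q : ℝ) + 2 with hb_def
  have ha : 0 < a := by positivity
  have hb : 0 < b := by positivity
  have hsa : Real.sqrt a ^ 2 = a := Real.sq_sqrt ha.le
  have hsb : Real.sqrt b ^ 2 = b := Real.sq_sqrt hb.le
  have hs3 : Real.sqrt 3 ^ 2 = 3 := Real.sq_sqrt (by norm_num)
  have hsa0 : 0 < Real.sqrt a := Real.sqrt_pos.2 ha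
  have hsb0 : 0 < Real.sqrt b := Real.sqrt_pos.2 hb
  have hs30 : 0 < Real.sqrt 3 := Real.sqrt_pos.2 (by norm_num)
  set c : ℝ := Real.sqrt a / (Real.sqrt 3 * Real.sqrt b) with hc_def
  have hc : 0 < c := by positivity
  clear_value a b c
  have hc2 : 3 * b * c ^ 2 = a := by
    rw [hc_def, div_pow, mul_pow, hsa, hsb, hs3]
    field_simp
  have hab : a = b - 2 * (m₂ : ℝ) := by
    rw [ha_def, hb_def, hQR]; ring
  -- a^{3/2} = a * √a
  have hA32 : a ^ ((3:ℝ)/2) = a * Real.sqrt a := by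
    rw [show (3:ℝ)/2 = 1 + 1/2 by norm_num, Real.rpow_add ha, Real.rpow_one,
      ← Real.sqrt_eq_rpow]
  have hRHS : 2 * a ^ ((3:ℝ)/2) / (3 * Real.sqrt 3 * Real.sqrt b) = 2 * b * c ^ 3 := by
    rw [hA32, hc_def, div_pow, mul_pow]
    rw [show Real.sqrt a ^ 3 = a * Real.sqrt a by rw [pow_succ, hsa]]
    rw [show Real.sqrt 3 ^ 3 = 3 * Real.sqrt 3 by rw [pow_succ, hs3]]
    rw [show Real.sqrt b ^ 3 = b * Real.sqrt b by rw [pow_succ, hsb]]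
    field_simp
  -- the main rewriting of h in terms of x = L²/√(L⁴+16)
  have main_eq : ∀ L : ℝ, 0 < L →
      16 * b * L ^ 2 / (L ^ 4 + 16) ^ ((3:ℝ)/2) - 2 * (m₂ : ℝ) * L ^ 2 / (L ^ 4 + 16) ^ ((1:ℝ)/2)
        = a * (L ^ 2 / Real.sqrt (L ^ 4 + 16)) - b * (L ^ 2 / Real.sqrt (L ^ 4 + 16)) ^ 3 := by
    intro L hL
    have hs : (0:ℝ) < L ^ 4 + 16 := by positivity
    have hss : Real.sqrt (L ^ 4 + 16) ^ 2 = L ^ 4 + 16 := Real.sq_sqrt hs.le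
    have hss0 : 0 < Real.sqrt (L ^ 4 + 16) := Real.sqrt_pos.2 hs
    have h12 : (L ^ 4 + 16) ^ ((1:ℝ)/2) = Real.sqrt (L ^ 4 + 16) := (Real.sqrt_eq_rpow _).symm
    have h32 : (L ^ 4 + 16) ^ ((3:ℝ)/2) = (L ^ 4 + 16) * Real.sqrt (L ^ 4 + 16) := by
      rw [show (3:ℝ)/2 = 1 + 1/2 by norm_num, Real.rpow_add hs, Real.rpow_one,
        ← Real.sqrt_eq_rpow]
    have hx3 : (L ^ 2 / Real.sqrt (L ^ 4 + 16)) ^ 3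
        = L ^ 6 / ((L ^ 4 + 16) * Real.sqrt (L ^ 4 + 16)) := by
      rw [div_pow, show Real.sqrt (L ^ 4 + 16) ^ 3 = (L ^ 4 + 16) * Real.sqrt (L ^ 4 + 16) by
        rw [pow_succ, hss], show (L ^ 2) ^ 3 = L ^ 6 by ring]
    have hd1 : ((L ^ 4 + 16) * Real.sqrt (L ^ 4 + 16)) ≠ 0 := by positivity
    have hd2 : Real.sqrt (L ^ 4 + 16) ≠ 0 := by positivity
    rw [h12, h32, hab, hx3, mul_div_assoc', mul_div_assoc',
      div_sub_div _ _ hd1 hd2, div_sub_div _ _ hd2 hd1,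
      div_eq_div_iff (by positivity) (by positivity)]
    ring
  constructor
  · intro L hL
    rw [main_eq L hL]
    have hx0 : 0 ≤ L ^ 2 / Real.sqrt (L ^ 4 + 16) := by positivity
    calc a * (L ^ 2 / Real.sqrt (L ^ 4 + 16)) - b * (L ^ 2 / Real.sqrt (L ^ 4 + 16)) ^ 3
        = 3 * b * c ^ 2 * (L ^ 2 / Real.sqrt (L ^ 4 + 16))
            - b * (L ^ 2 / Real.sqrt (L ^ 4 + 16)) ^ 3 := by rw [hc2]
      _ ≤ 2 * b * c ^ 3 := cube_aux b c _ hb.le hc.le hx0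
      _ = 2 * a ^ ((3:ℝ)/2) / (3 * Real.sqrt 3 * Real.sqrt b) := hRHS.symm
  · intro L₀ hL₀
    set d : ℝ := b + (m₂ : ℝ) with hd_def
    have hd : 0 < d := by positivity
    clear_value d
    have hL₀pos : 0 < L₀ := by
      rw [hL₀]; positivity
    have hL4 : L₀ ^ 4 = 8 * a / d := by
      rw [hL₀, div_pow, mul_pow]
      rw [← Real.rpow_natCast (2 ^ ((3:ℝ)/4)) 4, ← Real.rpow_mul (by norm_num : (0:ℝ) ≤ 2)]
      rw [← Real.rpow_natCast (a ^ ((1:ℝ)/4)) 4, ← Real.rpow_mul ha.le]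
      rw [← Real.rpow_natCast (d ^ ((1:ℝ)/4)) 4, ← Real.rpow_mul hd.le]
      norm_num
    have h8a : 8 * a + 16 * d = 24 * b := by
      rw [hd_def, ha_def, hb_def, hQR]; ring
    have hx₀ : L₀ ^ 2 / Real.sqrt (L₀ ^ 4 + 16) = c := by
      have hL2 : L₀ ^ 2 = Real.sqrt (8 * a / d) := by
        rw [← hL4, show L₀ ^ 4 = (L₀ ^ 2) ^ 2 by ring, Real.sqrt_sq (sq_nonneg L₀)]
      have hs0 : L₀ ^ 4 + 16 = 24 * b / d := by
        rw [hL4]; field_simp; linarith [h8a]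
      rw [hL2, hs0, ← Real.sqrt_div (by positivity)]
      rw [hc_def, ← Real.sqrt_mul (by norm_num : (0:ℝ) ≤ 3), ← Real.sqrt_div ha.le]
      congr 1
      field_simp
      ring
    rw [main_eq L₀ hL₀pos, hx₀, hRHS]
    linear_combination (-c) * hc2
end

section
/- Fix an integer n ≥ 2 and set n̄ = n − 1/2. With the operators and functions defined in the context on ℝ^{2n+1}, the function u = (B+C)^{1/2} / (C·(A+C)^{n−1/2}) satisfies, at every point other than the origin: |∇₀u|² / u² = (2B−A)/(2C(C+B)) + n̄·2(AB − AC + BC)/(C²(C+A)) + n̄²·2B/(C(C+A)). -/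
noncomputable section

/-- The underlying space `ℝ^{2n+1}` of the anisotropic Heisenberg group
`Heis^n(1/2,1,…,1)`, with coordinates `(x, y, t)`. -/
abbrev Pt (n : ℕ) := (Fin n → ℝ) × (Fin n → ℝ) × ℝ

/-- The anisotropy coefficients: `c₁ = 1/2`, `c_j = 1` for `j ≥ 2`. -/
def cc {n : ℕ} (j : Fin n) : ℝ := if (j : ℕ) = 0 then 1 / 2 else 1

/-- The left-invariant horizontal vector field `X_j f = ∂f/∂x_j − c_j y_j ∂f/∂t`. -/
def Xop {n : ℕ} (j : Fin n) (f : Pt n → ℝ) (p : Pt n) : ℝ :=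
  fderiv ℝ f p (Pi.single j 1, 0, -(cc j) * p.2.1 j)

/-- The left-invariant horizontal vector field `Y_j f = ∂f/∂y_j + c_j x_j ∂f/∂t`. -/
def Yop {n : ℕ} (j : Fin n) (f : Pt n → ℝ) (p : Pt n) : ℝ :=
  fderiv ℝ f p (0, Pi.single j 1, cc j * p.1 j)

/-- The sub-Laplacian `ℒ f = Σⱼ XⱼXⱼ f + YⱼYⱼ f`. -/
def subLap {n : ℕ} (f : Pt n → ℝ) (p : Pt n) : ℝ :=
  ∑ j : Fin n, (Xop j (Xop j f) p + Yop j (Yop j f) p)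

/-- The squared norm of the horizontal gradient: `|∇₀f|² = Σⱼ (Xⱼf)² + (Yⱼf)²`. -/
def gradSq {n : ℕ} (f : Pt n → ℝ) (p : Pt n) : ℝ :=
  ∑ j : Fin n, ((Xop j f p) ^ 2 + (Yop j f p) ^ 2)

/-- The ∞-Laplacian `ℒ_∞ f = (1/2) Σⱼ [Xⱼ(|∇₀f|²)·Xⱼf + Yⱼ(|∇₀f|²)·Yⱼf]`. -/
def infLap {n : ℕ} (f : Pt n → ℝ) (p : Pt n) : ℝ :=
  (1 / 2) * ∑ j : Fin n,
    (Xop j (gradSq f) p * Xop j f p + Yop j (gradSq f) p * Yop j f p)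

/-- `A = (x₁² + y₁²)/4`. -/
def Afun {n : ℕ} [NeZero n] (p : Pt n) : ℝ := (p.1 0 ^ 2 + p.2.1 0 ^ 2) / 4

/-- `B = A + (1/2) Σ_{j≥2} (x_j² + y_j²)`. -/
def Bfun {n : ℕ} [NeZero n] (p : Pt n) : ℝ :=
  Afun p + (1 / 2) * ∑ j ∈ Finset.univ \ {0}, (p.1 j ^ 2 + p.2.1 j ^ 2)

/-- `C = √(B² + t²)`. -/
def Cfun {n : ℕ} [NeZero n] (p : Pt n) : ℝ :=
  Real.sqrt (Bfun p ^ 2 + p.2.2 ^ 2)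

/-- The fundamental solution `u = (B+C)^{1/2} / (C (A+C)^{n−1/2})` (up to a constant). -/
def ufun (n : ℕ) [NeZero n] (p : Pt n) : ℝ :=
  Real.sqrt (Bfun p + Cfun p) / (Cfun p * (Afun p + Cfun p) ^ ((n : ℝ) - 1 / 2))

/-- The homogeneous quasinorm
`N = 2^{1/2+1/(4n)} C^{1/(2n)} (A+C)^{1/2−1/(4n)} / (B+C)^{1/(4n)}`. -/
def Nfun (n : ℕ) [NeZero n] (p : Pt n) : ℝ :=
  2 ^ ((1 : ℝ) / 2 + 1 / (4 * n)) * Cfun p ^ ((1 : ℝ) / (2 * n))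
    * (Afun p + Cfun p) ^ ((1 : ℝ) / 2 - 1 / (4 * n))
    / (Bfun p + Cfun p) ^ ((1 : ℝ) / (4 * n))

end

noncomputable section

/-!
Since `u = (B+C)^{1/2} C^{-1} (A+C)^{-n̄}`, its logarithmic derivative is
`∇₀u/u = ∇₀(B+C)/(2(B+C)) - ∇₀C/C - n̄ ∇₀(A+C)/(A+C)`, so `|∇₀u|²/u²` is a quadratic form in the
Gram matrix of `∇₀A, ∇₀B, ∇₀C`. In each `(x_j, y_j)`-plane `∇₀t` is `∇₀B` turned by a right angle
and `∇₀C = (B ∇₀B + t ∇₀t)/C`; together with `C² = B² + t²` this gives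
`|∇₀B|² = |∇₀C|² = 2B - A`, `⟨∇₀B, ∇₀C⟩ = B(2B - A)/C`, `|∇₀A|² = ⟨∇₀A, ∇₀B⟩ = A` and
`⟨∇₀A, ∇₀C⟩ = AB/C`.
-/

open Real

theorem HasFDerivAt.sqrt_div_mul_rpow {E : Type*} [NormedAddCommGroup E] [NormedSpace ℝ E]
    {f g h : E → ℝ} {f' g' h' : E →L[ℝ] ℝ} {p : E} (r : ℝ)
    (hf : HasFDerivAt f f' p) (hg : HasFDerivAt g g' p) (hh : HasFDerivAt h h' p)
    (hf0 : 0 < f p) (hg0 : g p ≠ 0) (hh0 : 0 < h p) :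
    HasFDerivAt (fun q => √(f q) / (g q * h q ^ r))
      ((√(f p) / (g p * h p ^ r)) • ((2 * f p)⁻¹ • f' - (g p)⁻¹ • g' - (r / h p) • h')) p := by
  have hhr : 0 < h p ^ r := rpow_pos_of_pos hh0 r
  have hden := hg.fun_mul (hh.rpow_const (p := r) (Or.inl hh0.ne'))
  have hquot := (hf.sqrt hf0.ne').fun_mul
    ((hasDerivAt_inv (mul_ne_zero hg0 hhr.ne')).comp_hasFDerivAt p hden)
  simp only [Function.comp_def, ← div_eq_mul_inv] at hquot
  refine hquot.congr_fderiv ?_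
  ext v
  have hsq : √(f p) ^ 2 = f p := sq_sqrt hf0.le
  simp only [rpow_sub_one hh0.ne', smul_add, neg_smul, smul_neg, mul_inv_rev, one_div, add_apply,
    neg_apply, smul_apply, smul_eq_mul, sub_apply]
  field_simp
  linear_combination (-(g p * h p * f' v)) * hsq

section Coordinates

variable {n : ℕ}

lemma fderiv_x_apply (j : Fin n) (p v : Pt n) :
    fderiv ℝ (fun q : Pt n => q.1 j) p v = v.1 j := by
  rw [fderiv_apply differentiableAt_fst, fderiv_fst]
  rfl

lemma fderiv_y_apply (j : Fin n) (p v : Pt n) :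
    fderiv ℝ (fun q : Pt n => q.2.1 j) p v = v.2.1 j := by
  rw [fderiv_apply (by fun_prop), fderiv.fst (by fun_prop), fderiv_snd]
  rfl

lemma fderiv_t_apply (p v : Pt n) : fderiv ℝ (fun q : Pt n => q.2.2) p v = v.2.2 := by
  rw [fderiv.snd (by fun_prop), fderiv_snd]
  rfl

lemma fderiv_sq_add_sq_apply (j : Fin n) (p v : Pt n) :
    fderiv ℝ (fun q : Pt n => q.1 j ^ 2 + q.2.1 j ^ 2) p v
      = 2 * (p.1 j * v.1 j + p.2.1 j * v.2.1 j) := by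
  simp (disch := fun_prop) only [fderiv_fun_add, fderiv_fun_pow, fderiv_x_apply, fderiv_y_apply,
    add_apply, smul_apply, smul_eq_mul]
  ring

lemma cc_pos (j : Fin n) : 0 < cc j := by
  unfold cc
  split_ifs <;> norm_num

end Coordinates

section Heisenberg

variable {n : ℕ} [NeZero n] {p : Pt n}

lemma cc_zero : cc (0 : Fin n) = 1 / 2 := by simp [cc]

lemma cc_of_ne_zero {j : Fin n} (hj : j ≠ 0) : cc j = 1 := by
  simp [cc, Fin.val_eq_zero_iff, hj]

lemma Afun_eq_cc : Afun = fun q : Pt n => cc (0 : Fin n) / 2 * (q.1 0 ^ 2 + q.2.1 0 ^ 2) := by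
  ext q
  rw [Afun, cc_zero]
  ring

lemma Bfun_eq_sum : Bfun = fun q : Pt n => ∑ j, cc j / 2 * (q.1 j ^ 2 + q.2.1 j ^ 2) := by
  ext q
  rw [Bfun, Afun_eq_cc, ← Finset.add_sum_erase _ _ (Finset.mem_univ 0), Finset.mul_sum,
    Finset.sdiff_singleton_eq_erase]
  congr 1
  refine Finset.sum_congr rfl fun j hj => ?_
  rw [cc_of_ne_zero (Finset.ne_of_mem_erase hj)]

lemma Afun_nonneg (p : Pt n) : 0 ≤ Afun p := by
  unfold Afun
  positivity

lemma Bfun_nonneg (p : Pt n) : 0 ≤ Bfun p := by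
  rw [Bfun_eq_sum]
  exact Finset.sum_nonneg fun j _ => mul_nonneg (by linarith [cc_pos j]) (by positivity)

lemma sq_Bfun_add_sq_pos (hp : p ≠ 0) : 0 < Bfun p ^ 2 + p.2.2 ^ 2 := by
  by_contra! h
  have hB : Bfun p = 0 := by nlinarith [sq_nonneg (Bfun p), sq_nonneg p.2.2]
  have ht : p.2.2 = 0 := by nlinarith [sq_nonneg (Bfun p), sq_nonneg p.2.2]
  have hterm := (Finset.sum_eq_zero_iff_of_nonneg fun j _ =>
    mul_nonneg (by linarith [cc_pos j]) (by positivity)).1 (congrFun Bfun_eq_sum p ▸ hB)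
  have hxy (j : Fin n) : p.1 j = 0 ∧ p.2.1 j = 0 := by
    have h0 : p.1 j ^ 2 + p.2.1 j ^ 2 = 0 :=
      (mul_eq_zero.1 (hterm j (Finset.mem_univ j))).resolve_left (half_pos (cc_pos j)).ne'
    constructor <;> nlinarith [sq_nonneg (p.1 j), sq_nonneg (p.2.1 j)]
  exact hp (Prod.ext (funext fun j => (hxy j).1) (Prod.ext (funext fun j => (hxy j).2) ht))

lemma Cfun_pos (hp : p ≠ 0) : 0 < Cfun p := sqrt_pos.2 (sq_Bfun_add_sq_pos hp)

lemma Cfun_sq (p : Pt n) : Cfun p ^ 2 = Bfun p ^ 2 + p.2.2 ^ 2 := sq_sqrt (by positivity)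

lemma differentiable_Afun : Differentiable ℝ (Afun : Pt n → ℝ) := by
  unfold Afun
  fun_prop

lemma differentiable_Bfun : Differentiable ℝ (Bfun : Pt n → ℝ) := by
  rw [Bfun_eq_sum]
  fun_prop

lemma differentiableAt_Cfun (hp : p ≠ 0) : DifferentiableAt ℝ Cfun p :=
  ((differentiable_Bfun p).pow 2 |>.add (by fun_prop)).sqrt (sq_Bfun_add_sq_pos hp).ne'

lemma fderiv_Afun_apply (p v : Pt n) :
    fderiv ℝ Afun p v = cc (0 : Fin n) * (p.1 0 * v.1 0 + p.2.1 0 * v.2.1 0) := by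
  rw [Afun_eq_cc, fderiv_const_mul (by fun_prop), smul_apply,
    fderiv_sq_add_sq_apply, smul_eq_mul]
  ring

lemma fderiv_Bfun_apply (p v : Pt n) :
    fderiv ℝ Bfun p v = ∑ j, cc j * (p.1 j * v.1 j + p.2.1 j * v.2.1 j) := by
  rw [Bfun_eq_sum, fderiv_fun_sum (by fun_prop)]
  simp (disch := fun_prop) only [fderiv_const_mul, sum_apply,
    smul_apply, fderiv_sq_add_sq_apply, smul_eq_mul]
  exact Finset.sum_congr rfl fun j _ => by ring

lemma fderiv_Cfun_apply (hp : p ≠ 0) (v : Pt n) :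
    fderiv ℝ Cfun p v = (Bfun p * fderiv ℝ Bfun p v + p.2.2 * v.2.2) / Cfun p := by
  have hB := differentiable_Bfun (n := n) p
  rw [show (Cfun : Pt n → ℝ) = fun q => √(Bfun q ^ 2 + q.2.2 ^ 2) from rfl,
    fderiv_sqrt (f := fun q => Bfun q ^ 2 + q.2.2 ^ 2) (by fun_prop) (sq_Bfun_add_sq_pos hp).ne']
  simp (disch := fun_prop) only [fderiv_fun_add, fderiv_fun_pow, fderiv_t_apply,
    smul_apply, add_apply, smul_eq_mul]
  rw [← Cfun]
  field_simp
  ring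

lemma Xop_Afun (j : Fin n) (p : Pt n) : Xop j Afun p = if j = 0 then cc j * p.1 j else 0 := by
  rw [Xop, fderiv_Afun_apply]
  rcases eq_or_ne j 0 with rfl | hj
  · simp
  · simp [hj, Ne.symm hj]

lemma Yop_Afun (j : Fin n) (p : Pt n) : Yop j Afun p = if j = 0 then cc j * p.2.1 j else 0 := by
  rw [Yop, fderiv_Afun_apply]
  rcases eq_or_ne j 0 with rfl | hj
  · simp
  · simp [hj, Ne.symm hj]

lemma Xop_Bfun (j : Fin n) (p : Pt n) : Xop j Bfun p = cc j * p.1 j := by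
  simp [Xop, fderiv_Bfun_apply, Pi.single_apply]

lemma Yop_Bfun (j : Fin n) (p : Pt n) : Yop j Bfun p = cc j * p.2.1 j := by
  simp [Yop, fderiv_Bfun_apply, Pi.single_apply]

lemma Xop_Cfun (hp : p ≠ 0) (j : Fin n) :
    Xop j Cfun p = (Bfun p * (cc j * p.1 j) - p.2.2 * (cc j * p.2.1 j)) / Cfun p := by
  rw [← Xop_Bfun, Xop, Xop, fderiv_Cfun_apply hp]
  ring

lemma Yop_Cfun (hp : p ≠ 0) (j : Fin n) :
    Yop j Cfun p = (Bfun p * (cc j * p.2.1 j) + p.2.2 * (cc j * p.1 j)) / Cfun p := by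
  rw [← Yop_Bfun, Yop, Yop, fderiv_Cfun_apply hp]

lemma sq_add_sq_Xop_Yop_comb (hp : p ≠ 0) (j : Fin n) (a b : ℝ) :
    (a * Xop j Bfun p + b * Xop j Cfun p) ^ 2 + (a * Yop j Bfun p + b * Yop j Cfun p) ^ 2
      = cc j ^ 2 * (p.1 j ^ 2 + p.2.1 j ^ 2) * (a ^ 2 + 2 * a * b * (Bfun p / Cfun p) + b ^ 2) := by
  rw [Xop_Bfun, Yop_Bfun, Xop_Cfun hp, Yop_Cfun hp]
  have hC := (Cfun_pos hp).ne'
  field_simp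
  linear_combination (-(b ^ 2 * cc j ^ 2 * (p.1 j ^ 2 + p.2.1 j ^ 2))) * Cfun_sq p

lemma gradSq_of_fderiv_eq (hp : p ≠ 0) {f : Pt n → ℝ} {α β γ : ℝ}
    (hf : ∀ v, fderiv ℝ f p v
      = α * fderiv ℝ Bfun p v + β * fderiv ℝ Cfun p v + γ * fderiv ℝ Afun p v) :
    gradSq f p = (α ^ 2 + β ^ 2) * (2 * Bfun p - Afun p) + γ ^ 2 * Afun p
      + 2 * α * β * (Bfun p / Cfun p) * (2 * Bfun p - Afun p) + 2 * α * γ * Afun p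
      + 2 * β * γ * Afun p * (Bfun p / Cfun p) := by
  have hX (j : Fin n) : Xop j f p = α * Xop j Bfun p + β * Xop j Cfun p + γ * Xop j Afun p :=
    hf _
  have hY (j : Fin n) : Yop j f p = α * Yop j Bfun p + β * Yop j Cfun p + γ * Yop j Afun p :=
    hf _
  have hzero : Xop 0 f p ^ 2 + Yop 0 f p ^ 2
      = Afun p * ((α + γ) ^ 2 + 2 * (α + γ) * β * (Bfun p / Cfun p) + β ^ 2) := by
    rw [hX, hY, Xop_Afun, Yop_Afun, if_pos rfl, if_pos rfl, ← Xop_Bfun 0 p, ← Yop_Bfun 0 p]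
    convert sq_add_sq_Xop_Yop_comb hp 0 (α + γ) β using 1
    · ring
    · rw [cc_zero, Afun]
      ring
  have hne (j : Fin n) (hj : j ∈ Finset.univ.erase 0) : Xop j f p ^ 2 + Yop j f p ^ 2
      = (p.1 j ^ 2 + p.2.1 j ^ 2) * (α ^ 2 + 2 * α * β * (Bfun p / Cfun p) + β ^ 2) := by
    have hj0 := Finset.ne_of_mem_erase hj
    rw [hX, hY, Xop_Afun, Yop_Afun, if_neg hj0, if_neg hj0, mul_zero, add_zero, add_zero,
      sq_add_sq_Xop_Yop_comb hp, cc_of_ne_zero hj0]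
    ring
  have hsum : ∑ j ∈ Finset.univ.erase 0, (p.1 j ^ 2 + p.2.1 j ^ 2) = 2 * (Bfun p - Afun p) := by
    rw [Bfun, Finset.sdiff_singleton_eq_erase]
    ring
  rw [gradSq, ← Finset.add_sum_erase _ _ (Finset.mem_univ 0), hzero, Finset.sum_congr rfl hne,
    ← Finset.sum_mul, hsum]
  ring

lemma ufun_pos (hp : p ≠ 0) : 0 < ufun n p := by
  have := Cfun_pos hp
  have := Afun_nonneg p
  have := Bfun_nonneg p
  unfold ufun
  positivity

lemma fderiv_ufun_apply (hp : p ≠ 0) (v : Pt n) :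
    fderiv ℝ (ufun n) p v = ufun n p *
      ((fderiv ℝ Bfun p v + fderiv ℝ Cfun p v) / (2 * (Bfun p + Cfun p))
        - fderiv ℝ Cfun p v / Cfun p
        - ((n : ℝ) - 1 / 2) * ((fderiv ℝ Afun p v + fderiv ℝ Cfun p v) / (Afun p + Cfun p))) := by
  have hC := Cfun_pos hp
  have hA := Afun_nonneg p
  have hB := Bfun_nonneg p
  have hA' := (differentiable_Afun p).hasFDerivAt
  have hB' := (differentiable_Bfun p).hasFDerivAt
  have hC' := (differentiableAt_Cfun hp).hasFDerivAt
  have hu := (hB'.fun_add hC').sqrt_div_mul_rpow ((n : ℝ) - 1 / 2) hC' (hA'.fun_add hC')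
    (by positivity) hC.ne' (by positivity)
  rw [show ufun n = fun q => √(Bfun q + Cfun q) / (Cfun q * (Afun q + Cfun q) ^ ((n : ℝ) - 1 / 2))
    from rfl, hu.fderiv]
  simp only [smul_apply, sub_apply, add_apply, smul_eq_mul]
  ring

end Heisenberg

theorem gradSq_ufun_div_sq_general (n : ℕ) [NeZero n] :
    ∀ p : Pt n, p ≠ 0 →
      gradSq (ufun n) p / (ufun n p) ^ 2 =
        (2 * Bfun p - Afun p) / (2 * Cfun p * (Cfun p + Bfun p))
        + ((n : ℝ) - 1 / 2) *
            (2 * (Afun p * Bfun p - Afun p * Cfun p + Bfun p * Cfun p)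
              / (Cfun p ^ 2 * (Cfun p + Afun p)))
        + ((n : ℝ) - 1 / 2) ^ 2 *
            (2 * Bfun p / (Cfun p * (Cfun p + Afun p))) := by
  intro p hp
  set u := ufun n p
  set nbar : ℝ := (n : ℝ) - 1 / 2
  have hgrad := gradSq_of_fderiv_eq hp (α := u / (2 * (Bfun p + Cfun p)))
    (β := u * (1 / (2 * (Bfun p + Cfun p)) - 1 / Cfun p - nbar / (Afun p + Cfun p)))
    (γ := -(u * nbar / (Afun p + Cfun p))) fun v => by rw [fderiv_ufun_apply hp v]; ring
  have hu : u ≠ 0 := (ufun_pos hp).ne'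
  have hC := Cfun_pos hp
  have hA := Afun_nonneg p
  have hB := Bfun_nonneg p
  rw [hgrad]
  field_simp
  ring

/-- The squared horizontal gradient of `u = (B+C)^{1/2}/(C (A+C)^{n−1/2})` satisfies, away
from the origin and with `n̄ = n − 1/2`:
`|∇₀u|²/u² = (2B−A)/(2C(C+B)) + n̄·2(AB−AC+BC)/(C²(C+A)) + n̄²·2B/(C(C+A))`. -/
theorem gradSq_ufun_div_sq (n : ℕ) [NeZero n] (hn : 2 ≤ n) :
    ∀ p : Pt n, p ≠ 0 →
      gradSq (ufun n) p / (ufun n p) ^ 2 =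
        (2 * Bfun p - Afun p) / (2 * Cfun p * (Cfun p + Bfun p))
        + ((n : ℝ) - 1 / 2) *
            (2 * (Afun p * Bfun p - Afun p * Cfun p + Bfun p * Cfun p)
              / (Cfun p ^ 2 * (Cfun p + Afun p)))
        + ((n : ℝ) - 1 / 2) ^ 2 *
            (2 * Bfun p / (Cfun p * (Cfun p + Afun p))) :=
  gradSq_ufun_div_sq_general n

end
end
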